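/- arXiv:2311.11794 — 13 statements merged into one kernel-verified Lean document; each statement's English description precedes it below -/
import Mathlib

section
/- Let c > 0 and t, C₂, C₃ ∈ ℝ. Suppose f₁ : ℝ → ℝ is differentiable on the interval (c^{1/4}, ∞) and satisfies, for all r in this interval, the ODE 2·(r² + 4·f₁(r)·t)·f₁'(r) + 4·r·f₁(r) − r³·(1 + 16·(C₂² + C₃²)/(r⁴ − c)²)·t = 0. Then there exists a constant C₁ ∈ ℝ such that for all r ∈ (c^{1/4}, ∞): 2·t·f₁(r)² + r²·f₁(r) − (1/8)·t·(r⁴ − 16·(C₂² + C₃²)/(r⁴ − c)) = C₁. -/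
/-- Exactness of the ω₁-dHYM ODE on the Eguchi–Hanson space:
any differentiable solution of the nonlinear ODE on (c^{1/4}, ∞) admits the
displayed first integral. -/
theorem dHYM_omega1_EguchiHanson_first_integral
    (c t C₂ C₃ : ℝ) (hc : 0 < c) (f₁ : ℝ → ℝ)
    (hdiff : ∀ r ∈ Set.Ioi (c ^ ((1:ℝ)/4)), DifferentiableAt ℝ f₁ r)
    (hode : ∀ r ∈ Set.Ioi (c ^ ((1:ℝ)/4)),
      2 * (r ^ 2 + 4 * f₁ r * t) * deriv f₁ r + 4 * r * f₁ r
        - r ^ 3 * (1 + 16 * (C₂ ^ 2 + C₃ ^ 2) / (r ^ 4 - c) ^ 2) * t = 0) :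
    ∃ C₁ : ℝ, ∀ r ∈ Set.Ioi (c ^ ((1:ℝ)/4)),
      2 * t * (f₁ r) ^ 2 + r ^ 2 * f₁ r
        - (1/8) * t * (r ^ 4 - 16 * (C₂ ^ 2 + C₃ ^ 2) / (r ^ 4 - c)) = C₁ := by
  set a := c ^ ((1:ℝ)/4) with ha
  set K := C₂ ^ 2 + C₃ ^ 2 with hK
  set F : ℝ → ℝ := fun r =>
    2 * t * (f₁ r) ^ 2 + r ^ 2 * f₁ r - (1/8) * t * (r ^ 4 - 16 * K / (r ^ 4 - c))
    with hF
  have ha_pos : 0 < a := Real.rpow_pos_of_pos hc _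
  have hne : ∀ r ∈ Set.Ioi a, r ^ 4 - c ≠ 0 := by
    intro r hr
    have hr' : a < r := hr
    have h4 : a ^ 4 = c := by
      rw [ha, ← Real.rpow_natCast (c ^ ((1:ℝ)/4)) 4, ← Real.rpow_mul hc.le]
      norm_num
    have : c < r ^ 4 := by
      rw [← h4]
      exact pow_lt_pow_left₀ hr' ha_pos.le (by norm_num)
    linarith
  have hderiv : ∀ r ∈ Set.Ioi a, HasDerivAt F 0 r := by
    intro r hr
    have hd := hdiff r hr
    have hne' := hne r hr
    have h1 : HasDerivAt f₁ (deriv f₁ r) r := hd.hasDerivAt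
    have h2 : HasDerivAt (fun r : ℝ => r ^ 4 - c) (4 * r ^ 3) r := by
      simpa using ((hasDerivAt_pow 4 r).sub_const c)
    have h3 : HasDerivAt (fun r : ℝ => 16 * K / (r ^ 4 - c))
        ((0 * (r ^ 4 - c) - 16 * K * (4 * r ^ 3)) / (r ^ 4 - c) ^ 2) r :=
      (hasDerivAt_const r (16 * K)).div h2 hne'
    have hD : HasDerivAt F
        (2 * t * (↑2 * f₁ r ^ (2-1) * deriv f₁ r) + ((↑2 * r ^ (2-1)) * f₁ r + r ^ 2 * deriv f₁ r)
          - (1/8) * t * ((↑4 * r ^ (4-1)) - (0 * (r ^ 4 - c) - 16 * K * (4 * r ^ 3)) / (r ^ 4 - c) ^ 2)) r :=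
      (((h1.pow 2).const_mul (2 * t)).add ((hasDerivAt_pow 2 r).mul h1)).sub
        (((hasDerivAt_pow 4 r).sub h3).const_mul ((1/8) * t))
    have hode' := hode r hr
    convert hD using 1
    push_cast
    have hsq : (r ^ 4 - c) ^ 2 ≠ 0 := pow_ne_zero _ hne'
    field_simp at hode' ⊢
    nlinarith [hode', sq_nonneg (r ^ 4 - c)]
  refine ⟨F (a + 1), fun r hr => ?_⟩
  have hconv : Convex ℝ (Set.Ioi a) := convex_Ioi a
  have hdiffF : DifferentiableOn ℝ F (Set.Ioi a) := fun x hx =>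
    ((hderiv x hx).differentiableAt).differentiableWithinAt
  have hfd : ∀ x ∈ Set.Ioi a, fderivWithin ℝ F (Set.Ioi a) x = 0 := by
    intro x hx
    rw [fderivWithin_of_isOpen isOpen_Ioi hx, (hderiv x hx).hasFDerivAt.fderiv]
    ext y; simp
  exact hconv.is_const_of_fderivWithin_eq_zero hdiffF hfd hr (by simp : a + 1 ∈ Set.Ioi a)
end

section
/- Let c > 0 and t, C₁, C₃ ∈ ℝ. Suppose f₂ : ℝ → ℝ is differentiable on (c^{1/4}, ∞) and satisfies, for all r in this interval, the ODE (4·t·f₂(r) + √(r⁴ − c))·f₂'(r) + (2·r³/√(r⁴ − c))·f₂(r) − 2·(4·C₁²/r⁵ + 4·C₃²·r³/(r⁴ − c)² + r³/4)·t = 0. Then there exists a constant C₂ ∈ ℝ such that for all r ∈ (c^{1/4}, ∞): 2·t·f₂(r)² + √(r⁴ − c)·f₂(r) + 2·t·(C₁²/r⁴ + C₃²/(r⁴ − c) − r⁴/16) = C₂. -/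
/-- Exactness of the ω₂-dHYM ODE on the Eguchi–Hanson space:
any differentiable solution of the nonlinear ODE on (c^{1/4}, ∞) admits the
displayed first integral. -/
theorem dHYM_omega2_EguchiHanson_first_integral
    (c t C₁ C₃ : ℝ) (hc : 0 < c) (f₂ : ℝ → ℝ)
    (hdiff : ∀ r ∈ Set.Ioi (c ^ ((1:ℝ)/4)), DifferentiableAt ℝ f₂ r)
    (hode : ∀ r ∈ Set.Ioi (c ^ ((1:ℝ)/4)),
      (4 * t * f₂ r + Real.sqrt (r ^ 4 - c)) * deriv f₂ r
        + (2 * r ^ 3 / Real.sqrt (r ^ 4 - c)) * f₂ r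
        - 2 * (4 * C₁ ^ 2 / r ^ 5 + 4 * C₃ ^ 2 * r ^ 3 / (r ^ 4 - c) ^ 2 + r ^ 3 / 4) * t = 0) :
    ∃ C₂ : ℝ, ∀ r ∈ Set.Ioi (c ^ ((1:ℝ)/4)),
      2 * t * (f₂ r) ^ 2 + Real.sqrt (r ^ 4 - c) * f₂ r
        + 2 * t * (C₁ ^ 2 / r ^ 4 + C₃ ^ 2 / (r ^ 4 - c) - r ^ 4 / 16) = C₂ := by
  set a := c ^ ((1:ℝ)/4) with ha
  have ha0 : 0 < a := Real.rpow_pos_of_pos hc _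
  have ha4 : a ^ 4 = c := by
    rw [ha, ← Real.rpow_natCast (c ^ ((1:ℝ)/4)) 4, ← Real.rpow_mul hc.le]
    norm_num
  have key : ∀ r ∈ Set.Ioi a, c < r ^ 4 := by
    intro r hr
    have h4 : a ^ 4 < r ^ 4 := by
      exact pow_lt_pow_left₀ hr ha0.le (by norm_num)
    linarith [ha4 ▸ h4]
  set g : ℝ → ℝ := fun r => 2 * t * (f₂ r) ^ 2 + Real.sqrt (r ^ 4 - c) * f₂ r
      + 2 * t * (C₁ ^ 2 / r ^ 4 + C₃ ^ 2 / (r ^ 4 - c) - r ^ 4 / 16) with hgdef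
  have hg : ∀ r ∈ Set.Ioi a, HasDerivAt g 0 r := by
    intro r hr
    have hr0 : 0 < r := lt_trans ha0 hr
    have hrne : r ≠ 0 := hr0.ne'
    have hxc : c < r ^ 4 := key r hr
    have hxpos : 0 < r ^ 4 - c := by linarith
    have hxne : r ^ 4 - c ≠ 0 := hxpos.ne'
    have hspos : 0 < Real.sqrt (r ^ 4 - c) := Real.sqrt_pos.mpr hxpos
    have hsne : Real.sqrt (r ^ 4 - c) ≠ 0 := hspos.ne'
    have hs2 : Real.sqrt (r ^ 4 - c) ^ 2 = r ^ 4 - c := Real.sq_sqrt hxpos.le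
    have hf' : HasDerivAt f₂ (deriv f₂ r) r := (hdiff r hr).hasDerivAt
    have h1 : HasDerivAt (fun x : ℝ => x ^ 4 - c) (4 * r ^ 3) r := by
      simpa using (hasDerivAt_pow 4 r).sub_const c
    have hsq : HasDerivAt (fun x : ℝ => Real.sqrt (x ^ 4 - c))
        (4 * r ^ 3 / (2 * Real.sqrt (r ^ 4 - c))) r := h1.sqrt hxne
    have hA : HasDerivAt (fun x => 2 * t * (f₂ x) ^ 2)
        (2 * t * (2 * f₂ r * deriv f₂ r)) r := by
      have := (hf'.pow 2).const_mul (2 * t)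
      simpa [mul_comm, mul_assoc, mul_left_comm] using this
    have hB : HasDerivAt (fun x => Real.sqrt (x ^ 4 - c) * f₂ x)
        (4 * r ^ 3 / (2 * Real.sqrt (r ^ 4 - c)) * f₂ r
          + Real.sqrt (r ^ 4 - c) * deriv f₂ r) r := hsq.mul hf'
    have hd1 : HasDerivAt (fun x : ℝ => C₁ ^ 2 / x ^ 4)
        ((0 * r ^ 4 - C₁ ^ 2 * (4 * r ^ 3)) / (r ^ 4) ^ 2) r := by
      have := (hasDerivAt_const r (C₁ ^ 2)).fun_div (d := fun x : ℝ => x ^ 4)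
        (by simpa using (hasDerivAt_pow 4 r)) (pow_ne_zero 4 hrne)
      simpa using this
    have hd2 : HasDerivAt (fun x : ℝ => C₃ ^ 2 / (x ^ 4 - c))
        ((0 * (r ^ 4 - c) - C₃ ^ 2 * (4 * r ^ 3)) / (r ^ 4 - c) ^ 2) r := by
      have := (hasDerivAt_const r (C₃ ^ 2)).fun_div h1 hxne
      simpa using this
    have hd3 : HasDerivAt (fun x : ℝ => x ^ 4 / 16) (4 * r ^ 3 / 16) r := by
      have := (hasDerivAt_pow 4 r).div_const 16
      simpa using this
    have hC : HasDerivAt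
        (fun x => 2 * t * (C₁ ^ 2 / x ^ 4 + C₃ ^ 2 / (x ^ 4 - c) - x ^ 4 / 16))
        (2 * t * ((0 * r ^ 4 - C₁ ^ 2 * (4 * r ^ 3)) / (r ^ 4) ^ 2
          + (0 * (r ^ 4 - c) - C₃ ^ 2 * (4 * r ^ 3)) / (r ^ 4 - c) ^ 2
          - 4 * r ^ 3 / 16)) r := ((hd1.add hd2).sub hd3).const_mul (2 * t)
    have htot := (hA.add hB).add hC
    have hD : 2 * t * (2 * f₂ r * deriv f₂ r)
        + (4 * r ^ 3 / (2 * Real.sqrt (r ^ 4 - c)) * f₂ r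
          + Real.sqrt (r ^ 4 - c) * deriv f₂ r)
        + 2 * t * ((0 * r ^ 4 - C₁ ^ 2 * (4 * r ^ 3)) / (r ^ 4) ^ 2
          + (0 * (r ^ 4 - c) - C₃ ^ 2 * (4 * r ^ 3)) / (r ^ 4 - c) ^ 2
          - 4 * r ^ 3 / 16) = 0 := by
      have h := hode r hr
      have heq : 2 * t * (2 * f₂ r * deriv f₂ r)
          + (4 * r ^ 3 / (2 * Real.sqrt (r ^ 4 - c)) * f₂ r
            + Real.sqrt (r ^ 4 - c) * deriv f₂ r)
          + 2 * t * ((0 * r ^ 4 - C₁ ^ 2 * (4 * r ^ 3)) / (r ^ 4) ^ 2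
            + (0 * (r ^ 4 - c) - C₃ ^ 2 * (4 * r ^ 3)) / (r ^ 4 - c) ^ 2
            - 4 * r ^ 3 / 16)
          = (4 * t * f₂ r + Real.sqrt (r ^ 4 - c)) * deriv f₂ r
            + (2 * r ^ 3 / Real.sqrt (r ^ 4 - c)) * f₂ r
            - 2 * (4 * C₁ ^ 2 / r ^ 5 + 4 * C₃ ^ 2 * r ^ 3 / (r ^ 4 - c) ^ 2
              + r ^ 3 / 4) * t := by
        field_simp
        ring
      rw [heq, h]
    rw [hD] at htot
    exact htot
  have hconv : Convex ℝ (Set.Ioi a) := convex_Ioi a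
  have hopen : IsOpen (Set.Ioi a) := isOpen_Ioi
  have hdiffOn : DifferentiableOn ℝ g (Set.Ioi a) :=
    fun r hr => ((hg r hr).differentiableAt).differentiableWithinAt
  have hfd : ∀ r ∈ Set.Ioi a, fderivWithin ℝ g (Set.Ioi a) r = 0 := by
    intro r hr
    rw [fderivWithin_of_isOpen hopen hr]
    have := (hg r hr).hasFDerivAt.fderiv
    rw [this]
    ext
    simp
  have hmem : a + 1 ∈ Set.Ioi a := by simp
  exact ⟨g (a + 1), fun r hr =>
    hconv.is_const_of_fderivWithin_eq_zero hdiffOn hfd hr hmem⟩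
end

section
/- Let c > 0, k ∈ ℝ, and t ∈ ℝ with t ≠ 0. For r ≥ c^{1/4} set Δ(r) = (1 + t²)·r⁴ + t²·(16·k² − c) + 8·k·√c·t. Then: (i) Δ(r) ≥ 0 for all r ≥ c^{1/4}; (ii) for either choice of sign s ∈ {+1, −1}, the function f₁(r) = (−r² + s·√(Δ(r)))/(4·t) satisfies, for all r ≥ c^{1/4}, the identity 2·t·f₁(r)² + r²·f₁(r) − (t/8)·r⁴ = 2·t·k² + √c·k − (c/8)·t; (iii) if 4·k·t + √c ≥ 0 then the solution with s = +1 satisfies f₁(c^{1/4}) = k, and if 4·k·t + √c ≤ 0 then the solution with s = −1 satisfies f₁(c^{1/4}) = k. -/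
/-- The discriminant-type quantity Δ(r) for the ω₁-dHYM solutions on T*CP¹. -/
noncomputable def EHdelta (c k t r : ℝ) : ℝ :=
  (1 + t ^ 2) * r ^ 4 + t ^ 2 * (16 * k ^ 2 - c) + 8 * k * Real.sqrt c * t

/-- The explicit solution f₁ (with sign s) of the ω₁-dHYM equation on T*CP¹. -/
noncomputable def EHf1 (c k t s r : ℝ) : ℝ :=
  (-r ^ 2 + s * Real.sqrt (EHdelta c k t r)) / (4 * t)

/-- the explicit ω₁-dHYM solutions on the Eguchi–Hanson space:
nonnegativity of Δ, the implicit quadratic identity, and the boundary condition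
f₁(c^{1/4}) = k with the stated sign rule. -/
theorem dHYM_omega1_EguchiHanson_explicit_solutions
    (c k t : ℝ) (hc : 0 < c) (ht : t ≠ 0) :
    (∀ r : ℝ, c ^ ((1:ℝ)/4) ≤ r → 0 ≤ EHdelta c k t r) ∧
    (∀ s : ℝ, (s = 1 ∨ s = -1) → ∀ r : ℝ, c ^ ((1:ℝ)/4) ≤ r →
      2 * t * (EHf1 c k t s r) ^ 2 + r ^ 2 * EHf1 c k t s r - (t / 8) * r ^ 4
        = 2 * t * k ^ 2 + Real.sqrt c * k - (c / 8) * t) ∧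
    (0 ≤ 4 * k * t + Real.sqrt c → EHf1 c k t 1 (c ^ ((1:ℝ)/4)) = k) ∧
    (4 * k * t + Real.sqrt c ≤ 0 → EHf1 c k t (-1) (c ^ ((1:ℝ)/4)) = k) := by
  have hc' : (0:ℝ) ≤ c := hc.le
  have hsq : Real.sqrt c ^ 2 = c := Real.sq_sqrt hc'
  set r0 : ℝ := c ^ ((1:ℝ)/4) with hr0def
  have hr0pos : 0 < r0 := Real.rpow_pos_of_pos hc _
  have hr04 : r0 ^ 4 = c := by
    rw [hr0def, ← Real.rpow_natCast (c ^ ((1:ℝ)/4)) 4, ← Real.rpow_mul hc']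
    norm_num
  have hr02 : r0 ^ 2 = Real.sqrt c := by
    rw [hr0def, ← Real.rpow_natCast (c ^ ((1:ℝ)/4)) 2, ← Real.rpow_mul hc',
      Real.sqrt_eq_rpow]
    norm_num
  have hr4 : ∀ r : ℝ, r0 ≤ r → c ≤ r ^ 4 := by
    intro r hr
    calc c = r0 ^ 4 := hr04.symm
    _ ≤ r ^ 4 := pow_le_pow_left₀ hr0pos.le hr 4
  have hΔ : ∀ r : ℝ, r0 ≤ r → 0 ≤ EHdelta c k t r := by
    intro r hr
    have h1 := hr4 r hr
    have h2 : EHdelta c k t r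
        = (1 + t ^ 2) * (r ^ 4 - c) + (4 * k * t + Real.sqrt c) ^ 2 := by
      unfold EHdelta; nlinarith [hsq]
    rw [h2]
    have h3 : (0:ℝ) ≤ (1 + t ^ 2) * (r ^ 4 - c) := by
      apply mul_nonneg (by positivity); linarith
    nlinarith [sq_nonneg (4 * k * t + Real.sqrt c)]
  have hΔ0 : EHdelta c k t r0 = (4 * k * t + Real.sqrt c) ^ 2 := by
    unfold EHdelta
    nlinarith [hsq, hr04]
  refine ⟨hΔ, ?_, ?_, ?_⟩
  · intro s hs r hr
    have hDsq : Real.sqrt (EHdelta c k t r) ^ 2 = EHdelta c k t r :=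
      Real.sq_sqrt (hΔ r hr)
    have hs2 : s ^ 2 = 1 := by rcases hs with h | h <;> rw [h] <;> norm_num
    have hΔdef : EHdelta c k t r
        = (1 + t ^ 2) * r ^ 4 + t ^ 2 * (16 * k ^ 2 - c) + 8 * k * Real.sqrt c * t := rfl
    set D := Real.sqrt (EHdelta c k t r) with hD
    have h1 : 2 * t * (EHf1 c k t s r) ^ 2 + r ^ 2 * EHf1 c k t s r - (t / 8) * r ^ 4
        = (s ^ 2 * D ^ 2 - (1 + t ^ 2) * r ^ 4) / (8 * t) := by
      unfold EHf1
      rw [← hD]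
      field_simp
      ring
    rw [h1, hs2, hDsq, hΔdef]
    field_simp
    ring
  · intro h
    have hsqrt : Real.sqrt (EHdelta c k t r0) = 4 * k * t + Real.sqrt c := by
      rw [hΔ0, Real.sqrt_sq h]
    unfold EHf1
    rw [hsqrt, hr02]
    field_simp
    ring
  · intro h
    have hsqrt : Real.sqrt (EHdelta c k t r0) = -(4 * k * t + Real.sqrt c) := by
      rw [hΔ0, Real.sqrt_sq_eq_abs, abs_of_nonpos h]
    unfold EHf1
    rw [hsqrt, hr02]
    field_simp
    ring
end

section
/- Let c > 0 and k, λ ∈ ℝ. A differentiable function a₂ : (√(2c), ∞) → ℝ satisfies r²·a₂'(r)·(r⁴ − 4c²) + 2·r·a₂(r)·(3·r⁴ − 4c²) + 4·λ·r⁷ − 8·c·r³·(k + 2·c·λ) = 0 for all r ∈ (√(2c), ∞) if and only if there exists a constant C₀ ∈ ℝ such that a₂(r) = (C₀ − (r⁴ − 4c²)·(λ·(r⁴ − 4c²) − 4·c·k))/(2·r²·(r⁴ − 4c²)) for all r ∈ (√(2c), ∞). -/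
/-- general solution of the ω₁-HYM linear ODE on T*CP²:
a differentiable a₂ on (√(2c), ∞) solves the ODE iff it has the displayed form. -/
theorem HYM_omega1_TCP2_linear_ODE_solution
    (c k lam : ℝ) (hc : 0 < c) (a₂ : ℝ → ℝ)
    (hdiff : ∀ r ∈ Set.Ioi (Real.sqrt (2 * c)), DifferentiableAt ℝ a₂ r) :
    (∀ r ∈ Set.Ioi (Real.sqrt (2 * c)),
      r ^ 2 * deriv a₂ r * (r ^ 4 - 4 * c ^ 2) + 2 * r * a₂ r * (3 * r ^ 4 - 4 * c ^ 2)
        + 4 * lam * r ^ 7 - 8 * c * r ^ 3 * (k + 2 * c * lam) = 0) ↔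
    ∃ C₀ : ℝ, ∀ r ∈ Set.Ioi (Real.sqrt (2 * c)),
      a₂ r = (C₀ - (r ^ 4 - 4 * c ^ 2) * (lam * (r ^ 4 - 4 * c ^ 2) - 4 * c * k))
        / (2 * r ^ 2 * (r ^ 4 - 4 * c ^ 2)) := by
  set s := Set.Ioi (Real.sqrt (2 * c)) with hs_def
  have hsopen : IsOpen s := isOpen_Ioi
  have hrpos : ∀ r ∈ s, 0 < r := by
    intro r hr
    exact lt_of_le_of_lt (Real.sqrt_nonneg _) hr
  have hden : ∀ r ∈ s, 0 < r ^ 4 - 4 * c ^ 2 := by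
    intro r hr
    have h2 : Real.sqrt (2 * c) < r := hr
    have h2c : 2 * c < r ^ 2 := by
      have := Real.sq_sqrt (by linarith : (0:ℝ) ≤ 2 * c)
      nlinarith [Real.sqrt_nonneg (2 * c)]
    nlinarith
  set g : ℝ → ℝ := fun r => 2 * r ^ 2 * (r ^ 4 - 4 * c ^ 2) * a₂ r
      + (r ^ 4 - 4 * c ^ 2) * (lam * (r ^ 4 - 4 * c ^ 2) - 4 * c * k) with hg_def
  have hg : ∀ r ∈ s, HasDerivAt g
      (2 * (r ^ 2 * deriv a₂ r * (r ^ 4 - 4 * c ^ 2) + 2 * r * a₂ r * (3 * r ^ 4 - 4 * c ^ 2)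
        + 4 * lam * r ^ 7 - 8 * c * r ^ 3 * (k + 2 * c * lam))) r := by
    intro r hr
    have ha := (hdiff r hr).hasDerivAt
    have h1 : HasDerivAt (fun x : ℝ => 2 * x ^ 2 * (x ^ 4 - 4 * c ^ 2))
        (12 * r ^ 5 - 16 * c ^ 2 * r) r := by
      have heq : (fun x : ℝ => 2 * x ^ 2 * (x ^ 4 - 4 * c ^ 2))
          = fun x : ℝ => 2 * x ^ 6 - 8 * c ^ 2 * x ^ 2 := by funext x; ring
      rw [heq]
      have h := ((hasDerivAt_pow 6 r).const_mul 2).sub ((hasDerivAt_pow 2 r).const_mul (8 * c ^ 2))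
      refine h.congr_deriv ?_
      ring
    have h2 : HasDerivAt (fun x : ℝ => (x ^ 4 - 4 * c ^ 2) * (lam * (x ^ 4 - 4 * c ^ 2) - 4 * c * k))
        (8 * lam * r ^ 7 - 32 * lam * c ^ 2 * r ^ 3 - 16 * c * k * r ^ 3) r := by
      have heq : (fun x : ℝ => (x ^ 4 - 4 * c ^ 2) * (lam * (x ^ 4 - 4 * c ^ 2) - 4 * c * k))
          = fun x : ℝ => lam * x ^ 8 - (8 * lam * c ^ 2 + 4 * c * k) * x ^ 4
            + (16 * lam * c ^ 4 + 16 * c ^ 3 * k) := by funext x; ring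
      rw [heq]
      have h := (((hasDerivAt_pow 8 r).const_mul lam).sub
          ((hasDerivAt_pow 4 r).const_mul (8 * lam * c ^ 2 + 4 * c * k))).add
          (hasDerivAt_const r (16 * lam * c ^ 4 + 16 * c ^ 3 * k))
      refine h.congr_deriv ?_
      ring
    have h := (h1.mul ha).add h2
    refine h.congr_deriv ?_
    ring
  constructor
  · intro hODE
    have hg0 : ∀ r ∈ s, HasDerivAt g 0 r := by
      intro r hr
      have := hg r hr
      rwa [hODE r hr, mul_zero] at this
    obtain ⟨r₀, hr₀⟩ : ∃ r₀, r₀ ∈ s := ⟨Real.sqrt (2 * c) + 1, by simp [hs_def]⟩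
    refine ⟨g r₀, fun r hr => ?_⟩
    have hconst : g r = g r₀ := by
      have hconv : Convex ℝ s := convex_Ioi _
      have hdiffon : DifferentiableOn ℝ g s := fun x hx =>
        ((hg0 x hx).differentiableAt).differentiableWithinAt
      have hfd : ∀ x ∈ s, fderivWithin ℝ g s x = 0 := by
        intro x hx
        have h := (hg0 x hx).hasFDerivAt.hasFDerivWithinAt.fderivWithin
          (hsopen.uniqueDiffOn x hx)
        rw [h]
        ext
        simp
      exact hconv.is_const_of_fderivWithin_eq_zero hdiffon hfd hr hr₀
    have hd := (hden r hr).ne'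
    have hrne := (hrpos r hr).ne'
    have hval : 2 * r ^ 2 * (r ^ 4 - 4 * c ^ 2) * a₂ r
        + (r ^ 4 - 4 * c ^ 2) * (lam * (r ^ 4 - 4 * c ^ 2) - 4 * c * k) = g r₀ := hconst
    field_simp
    linear_combination hval
  · rintro ⟨C₀, hC⟩ r hr
    have hgconst : ∀ x ∈ s, g x = C₀ := by
      intro x hx
      have hdx := (hden x hx).ne'
      have hxne := (hrpos x hx).ne'
      have : g x = 2 * x ^ 2 * (x ^ 4 - 4 * c ^ 2) * a₂ x
        + (x ^ 4 - 4 * c ^ 2) * (lam * (x ^ 4 - 4 * c ^ 2) - 4 * c * k) := rfl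
      rw [this, hC x hx]
      field_simp
      ring
    have hgc : HasDerivAt g 0 r := by
      have hev : g =ᶠ[nhds r] fun _ => C₀ := by
        filter_upwards [hsopen.mem_nhds hr] with x hx using hgconst x hx
      exact (hasDerivAt_const r C₀).congr_of_eventuallyEq hev
    have huniq := (hg r hr).unique hgc
    linarith
end

section
/- Let c > 0 and λ ∈ ℝ. A differentiable function a₃ : (√(2c), ∞) → ℝ satisfies a₃'(r)·(r⁴ − 4c²) + 6·r³·a₃(r) + 4·λ·r³·√(r⁴ − 4c²) = 0 for all r ∈ (√(2c), ∞) if and only if there exists a constant C₀ ∈ ℝ such that a₃(r) = (C₀ − λ·(r⁴ − 4c²)²)/(2·(r⁴ − 4c²)^{3/2}) for all r ∈ (√(2c), ∞). -/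
/-- general solution of the ω₂-HYM linear ODE on T*CP²:
a differentiable a₃ on (√(2c), ∞) solves the ODE iff it has the displayed form. -/
theorem HYM_omega2_TCP2_linear_ODE_solution
    (c lam : ℝ) (hc : 0 < c) (a₃ : ℝ → ℝ)
    (hdiff : ∀ r ∈ Set.Ioi (Real.sqrt (2 * c)), DifferentiableAt ℝ a₃ r) :
    (∀ r ∈ Set.Ioi (Real.sqrt (2 * c)),
      deriv a₃ r * (r ^ 4 - 4 * c ^ 2) + 6 * r ^ 3 * a₃ r
        + 4 * lam * r ^ 3 * Real.sqrt (r ^ 4 - 4 * c ^ 2) = 0) ↔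
    ∃ C₀ : ℝ, ∀ r ∈ Set.Ioi (Real.sqrt (2 * c)),
      a₃ r = (C₀ - lam * (r ^ 4 - 4 * c ^ 2) ^ 2) / (2 * (r ^ 4 - 4 * c ^ 2) ^ ((3:ℝ)/2)) := by
  set S := Set.Ioi (Real.sqrt (2 * c)) with hS
  -- positivity of p r = r^4 - 4c^2 on S
  have hp : ∀ r ∈ S, 0 < r ^ 4 - 4 * c ^ 2 := by
    intro r hr
    have h1 : Real.sqrt (2 * c) < r := hr
    have hs0 : 0 < Real.sqrt (2 * c) := Real.sqrt_pos.mpr (by linarith)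
    have h2 : Real.sqrt (2 * c) ^ 2 = 2 * c := Real.sq_sqrt (by linarith)
    nlinarith [sq_nonneg (r ^ 2 - 2 * c), sq_nonneg (r + Real.sqrt (2 * c)),
      mul_pos (sub_pos.mpr h1) (by linarith : (0:ℝ) < r + Real.sqrt (2 * c))]
  set u : ℝ → ℝ := fun r =>
    (r ^ 4 - 4 * c ^ 2) * Real.sqrt (r ^ 4 - 4 * c ^ 2) * a₃ r
      + lam / 2 * (r ^ 4 - 4 * c ^ 2) ^ 2 with hu
  -- derivative of u
  have hU : ∀ r ∈ S, HasDerivAt u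
      (Real.sqrt (r ^ 4 - 4 * c ^ 2) *
        (deriv a₃ r * (r ^ 4 - 4 * c ^ 2) + 6 * r ^ 3 * a₃ r
          + 4 * lam * r ^ 3 * Real.sqrt (r ^ 4 - 4 * c ^ 2))) r := by
    intro r hr
    have hpr := hp r hr
    have hsq : (0:ℝ) < Real.sqrt (r ^ 4 - 4 * c ^ 2) := Real.sqrt_pos.mpr hpr
    have hP : HasDerivAt (fun x : ℝ => x ^ 4 - 4 * c ^ 2) (4 * r ^ 3) r := by
      simpa using ((hasDerivAt_pow 4 r).sub_const (4 * c ^ 2))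
    have hSq : HasDerivAt (fun x : ℝ => Real.sqrt (x ^ 4 - 4 * c ^ 2))
        (4 * r ^ 3 / (2 * Real.sqrt (r ^ 4 - 4 * c ^ 2))) r := hP.sqrt hpr.ne'
    have ha := (hdiff r hr).hasDerivAt
    have h := (((hP.mul hSq).mul ha).add
      ((hasDerivAt_const r (lam / 2)).mul (hP.pow 2)))
    convert h using 1
    · rfl
    · rfl
    · rfl
    simp only [Pi.mul_apply, Pi.pow_apply]
    set s := Real.sqrt (r ^ 4 - 4 * c ^ 2) with hs
    have h2 : s ^ 2 = r ^ 4 - 4 * c ^ 2 := Real.sq_sqrt hpr.le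
    rw [← h2]
    field_simp
    ring
  -- rpow identity
  have hrpow : ∀ r ∈ S, (r ^ 4 - 4 * c ^ 2) ^ ((3:ℝ)/2)
      = (r ^ 4 - 4 * c ^ 2) * Real.sqrt (r ^ 4 - 4 * c ^ 2) := by
    intro r hr
    have hpr := hp r hr
    rw [show (3:ℝ)/2 = 1 + 1/2 by norm_num, Real.rpow_add hpr, Real.rpow_one,
      Real.sqrt_eq_rpow]
  constructor
  · intro hode
    -- u has zero derivative on S
    have hus : ∀ r ∈ S, HasDerivAt u 0 r := by
      intro r hr
      have := hU r hr
      rwa [hode r hr, mul_zero] at this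
    have hconv : Convex ℝ S := convex_Ioi _
    have hdu : DifferentiableOn ℝ u S := fun r hr =>
      (hus r hr).differentiableAt.differentiableWithinAt
    have hfz : ∀ x ∈ S, fderivWithin ℝ u S x = 0 := by
      intro x hx
      rw [fderivWithin_of_isOpen isOpen_Ioi hx, (hus x hx).hasFDerivAt.fderiv]
      ext
      simp
    have hmem : Real.sqrt (2 * c) + 1 ∈ S := by
      simp [hS, Set.mem_Ioi]
    refine ⟨2 * u (Real.sqrt (2 * c) + 1), fun r hr => ?_⟩
    have huc : u r = u (Real.sqrt (2 * c) + 1) :=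
      hconv.is_const_of_fderivWithin_eq_zero hdu hfz hr hmem
    have hpr := hp r hr
    have hsq : (0:ℝ) < Real.sqrt (r ^ 4 - 4 * c ^ 2) := Real.sqrt_pos.mpr hpr
    rw [hrpow r hr]
    have hexp : (r ^ 4 - 4 * c ^ 2) * Real.sqrt (r ^ 4 - 4 * c ^ 2) * a₃ r
        + lam / 2 * (r ^ 4 - 4 * c ^ 2) ^ 2 = u (Real.sqrt (2 * c) + 1) := by
      rw [← huc]
    set U := u (Real.sqrt (2 * c) + 1) with hUdef
    clear_value U
    set s := Real.sqrt (r ^ 4 - 4 * c ^ 2) with hs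
    have h2 : s ^ 2 = r ^ 4 - 4 * c ^ 2 := Real.sq_sqrt hpr.le
    rw [← h2] at hexp ⊢
    have hs0 : s ≠ 0 := hsq.ne'
    field_simp
    linear_combination 2 * hexp
  · rintro ⟨C₀, hC⟩ r hr
    have huc : ∀ x ∈ S, u x = C₀ / 2 := by
      intro x hx
      have hpx := hp x hx
      have hsqx : (0:ℝ) < Real.sqrt (x ^ 4 - 4 * c ^ 2) := Real.sqrt_pos.mpr hpx
      have h2 : Real.sqrt (x ^ 4 - 4 * c ^ 2) ^ 2 = x ^ 4 - 4 * c ^ 2 :=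
        Real.sq_sqrt hpx.le
      have hx3 := hC x hx
      rw [hrpow x hx] at hx3
      rw [hu]
      simp only
      rw [hx3]
      set s := Real.sqrt (x ^ 4 - 4 * c ^ 2) with hs
      rw [← h2]
      have hs0 : s ≠ 0 := hsqx.ne'
      field_simp
      ring
    have hev : u =ᶠ[nhds r] (fun _ => C₀ / 2) :=
      Filter.eventuallyEq_of_mem (isOpen_Ioi.mem_nhds hr) huc
    have hderiv0 : deriv u r = 0 := by
      rw [hev.deriv_eq, deriv_const]
    have hD := (hU r hr).deriv
    rw [hderiv0] at hD
    have hsq : (0:ℝ) < Real.sqrt (r ^ 4 - 4 * c ^ 2) := Real.sqrt_pos.mpr (hp r hr)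
    have := mul_eq_zero.mp hD.symm
    rcases this with h | h
    · exact absurd h hsq.ne'
    · exact h
end

section
/- Let c > 0 and k ∈ ℝ. Differentiable functions a₂, a₃, a₄ : (√(2c), ∞) → ℝ satisfy the system r·a₂'(r)·(r⁴ − 4c²) − 2·a₂(r)·(r⁴ + 4c²) + 8·c·k·r² = 0, a₃'(r)·(r⁴ − 4c²) + 6·a₃(r)·r³ = 0, a₄'(r)·(r⁴ − 4c²) + 6·a₄(r)·r³ = 0 for all r ∈ (√(2c), ∞) if and only if there exist constants C₁, C₂, C₃ ∈ ℝ such that a₂(r) = (C₁·(r⁴ − 4c²) + 2·c·k)/r², a₃(r) = C₂/(r⁴ − 4c²)^{3/2}, a₄(r) = C₃/(r⁴ − 4c²)^{3/2} for all r ∈ (√(2c), ∞). -/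
lemma constOnIoi {a : ℝ} {f : ℝ → ℝ} (h : ∀ x ∈ Set.Ioi a, HasDerivAt f 0 x)
    {x y : ℝ} (hx : x ∈ Set.Ioi a) (hy : y ∈ Set.Ioi a) : f x = f y := by
  refine (convex_Ioi a).is_const_of_fderivWithin_eq_zero
    (fun z hz => ((h z hz).differentiableAt).differentiableWithinAt) (fun z hz => ?_) hx hy
  rw [fderivWithin_eq_fderiv (isOpen_Ioi.uniqueDiffOn z hz) (h z hz).differentiableAt]
  ext
  simp [(h z hz).deriv]

lemma posFacts {c r : ℝ} (hc : 0 < c) (hr : r ∈ Set.Ioi (Real.sqrt (2 * c))) :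
    0 < r ∧ 0 < r ^ 4 - 4 * c ^ 2 := by
  have hs : Real.sqrt (2 * c) < r := hr
  have h0 : (0:ℝ) ≤ 2 * c := by linarith
  have hsq : Real.sqrt (2 * c) ^ 2 = 2 * c := Real.sq_sqrt h0
  have hpos : 0 < Real.sqrt (2 * c) := Real.sqrt_pos.mpr (by linarith)
  have hr0 : 0 < r := lt_trans hpos hs
  have h2 : 2 * c < r ^ 2 := by nlinarith
  exact ⟨hr0, by nlinarith⟩

lemma hasDerivAt_x (c r : ℝ) :
    HasDerivAt (fun t : ℝ => t ^ 4 - 4 * c ^ 2) (4 * r ^ 3) r := by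
  simpa using ((hasDerivAt_pow 4 r).sub_const (4 * c ^ 2))

lemma ode2_forward (c k : ℝ) (hc : 0 < c) (f : ℝ → ℝ)
    (hd : ∀ r ∈ Set.Ioi (Real.sqrt (2 * c)), DifferentiableAt ℝ f r)
    (hode : ∀ r ∈ Set.Ioi (Real.sqrt (2 * c)),
      r * deriv f r * (r ^ 4 - 4 * c ^ 2) - 2 * f r * (r ^ 4 + 4 * c ^ 2)
        + 8 * c * k * r ^ 2 = 0) :
    ∃ C : ℝ, ∀ r ∈ Set.Ioi (Real.sqrt (2 * c)),
      f r = (C * (r ^ 4 - 4 * c ^ 2) + 2 * c * k) / r ^ 2 := by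
  set s := Set.Ioi (Real.sqrt (2 * c))
  have hr₀ : Real.sqrt (2 * c) + 1 ∈ s := Set.mem_Ioi.mpr (lt_add_one _)
  set g : ℝ → ℝ := fun t => (f t * t ^ 2 - 2 * c * k) / (t ^ 4 - 4 * c ^ 2) with hg
  have hderiv : ∀ r ∈ s, HasDerivAt g 0 r := by
    intro r hr
    obtain ⟨hr0, hx⟩ := posFacts hc hr
    have hD : HasDerivAt g
        (((deriv f r * r ^ 2 + f r * (2 * r ^ 1)) * (r ^ 4 - 4 * c ^ 2)
          - (f r * r ^ 2 - 2 * c * k) * (4 * r ^ 3)) / (r ^ 4 - 4 * c ^ 2) ^ 2) r := by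
      have h1 : HasDerivAt (fun t : ℝ => f t * t ^ 2 - 2 * c * k)
          (deriv f r * r ^ 2 + f r * (2 * r ^ 1)) r := by
        simpa using (((hd r hr).hasDerivAt).mul (hasDerivAt_pow 2 r)).sub_const (2 * c * k)
      exact h1.div (hasDerivAt_x c r) hx.ne'
    have key : ((deriv f r * r ^ 2 + f r * (2 * r ^ 1)) * (r ^ 4 - 4 * c ^ 2)
          - (f r * r ^ 2 - 2 * c * k) * (4 * r ^ 3)) / (r ^ 4 - 4 * c ^ 2) ^ 2 = 0 := by
      rw [div_eq_zero_iff]; left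
      have hnum : ((deriv f r * r ^ 2 + f r * (2 * r ^ 1)) * (r ^ 4 - 4 * c ^ 2)
          - (f r * r ^ 2 - 2 * c * k) * (4 * r ^ 3)) * r = 0 := by
        linear_combination (r ^ 2) * hode r hr
      rcases mul_eq_zero.mp hnum with h | h
      · exact h
      · exact absurd h hr0.ne'
    rwa [key] at hD
  refine ⟨g (Real.sqrt (2 * c) + 1), fun r hr => ?_⟩
  obtain ⟨hr0, hx⟩ := posFacts hc hr
  have hcon := constOnIoi hderiv hr hr₀
  have hgr : g r = (f r * r ^ 2 - 2 * c * k) / (r ^ 4 - 4 * c ^ 2) := rfl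
  have hkey : f r * r ^ 2 - 2 * c * k = g (Real.sqrt (2 * c) + 1) * (r ^ 4 - 4 * c ^ 2) := by
    rw [← hcon, hgr, div_mul_cancel₀ _ hx.ne']
  rw [eq_div_iff (by positivity : (r:ℝ) ^ 2 ≠ 0)]
  linarith

lemma ode2_back (c k C : ℝ) (hc : 0 < c) (f : ℝ → ℝ)
    (hf : ∀ r ∈ Set.Ioi (Real.sqrt (2 * c)),
      f r = (C * (r ^ 4 - 4 * c ^ 2) + 2 * c * k) / r ^ 2) :
    ∀ r ∈ Set.Ioi (Real.sqrt (2 * c)),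
      r * deriv f r * (r ^ 4 - 4 * c ^ 2) - 2 * f r * (r ^ 4 + 4 * c ^ 2)
        + 8 * c * k * r ^ 2 = 0 := by
  intro r hr
  obtain ⟨hr0, hx⟩ := posFacts hc hr
  have heq : f =ᶠ[nhds r] fun t => (C * (t ^ 4 - 4 * c ^ 2) + 2 * c * k) / t ^ 2 :=
    Filter.eventuallyEq_of_mem (isOpen_Ioi.mem_nhds hr) hf
  have hF : HasDerivAt (fun t : ℝ => (C * (t ^ 4 - 4 * c ^ 2) + 2 * c * k) / t ^ 2)
      (((C * (4 * r ^ 3)) * r ^ 2 - (C * (r ^ 4 - 4 * c ^ 2) + 2 * c * k) * (2 * r ^ 1))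
        / (r ^ 2) ^ 2) r := by
    exact (((hasDerivAt_x c r).const_mul C).add_const (2 * c * k)).div
      (hasDerivAt_pow 2 r) (by positivity)
  have hder : deriv f r = ((C * (4 * r ^ 3)) * r ^ 2
      - (C * (r ^ 4 - 4 * c ^ 2) + 2 * c * k) * (2 * r ^ 1)) / (r ^ 2) ^ 2 := by
    rw [heq.deriv_eq]; exact hF.deriv
  rw [hder, hf r hr]
  field_simp
  ring

lemma ode3_forward (c : ℝ) (hc : 0 < c) (f : ℝ → ℝ)
    (hd : ∀ r ∈ Set.Ioi (Real.sqrt (2 * c)), DifferentiableAt ℝ f r)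
    (hode : ∀ r ∈ Set.Ioi (Real.sqrt (2 * c)),
      deriv f r * (r ^ 4 - 4 * c ^ 2) + 6 * f r * r ^ 3 = 0) :
    ∃ C : ℝ, ∀ r ∈ Set.Ioi (Real.sqrt (2 * c)),
      f r = C / (r ^ 4 - 4 * c ^ 2) ^ ((3:ℝ)/2) := by
  set s := Set.Ioi (Real.sqrt (2 * c))
  have hr₀ : Real.sqrt (2 * c) + 1 ∈ s := Set.mem_Ioi.mpr (lt_add_one _)
  set h : ℝ → ℝ := fun t => f t * (t ^ 4 - 4 * c ^ 2) ^ ((3:ℝ)/2) with hh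
  have hderiv : ∀ r ∈ s, HasDerivAt h 0 r := by
    intro r hr
    obtain ⟨hr0, hx⟩ := posFacts hc hr
    have hD : HasDerivAt h
        (deriv f r * (r ^ 4 - 4 * c ^ 2) ^ ((3:ℝ)/2)
          + f r * (4 * r ^ 3 * ((3:ℝ)/2) * (r ^ 4 - 4 * c ^ 2) ^ ((3:ℝ)/2 - 1))) r :=
      ((hd r hr).hasDerivAt).mul
        ((hasDerivAt_x c r).rpow_const (Or.inr (by norm_num)))
    have e1 : ((3:ℝ)/2 - 1) = (1:ℝ)/2 := by norm_num
    have e2 : (r ^ 4 - 4 * c ^ 2) ^ ((3:ℝ)/2)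
        = (r ^ 4 - 4 * c ^ 2) ^ ((1:ℝ)/2) * (r ^ 4 - 4 * c ^ 2) := by
      rw [show (3:ℝ)/2 = 1/2 + 1 by norm_num, Real.rpow_add hx, Real.rpow_one]
    have key : deriv f r * (r ^ 4 - 4 * c ^ 2) ^ ((3:ℝ)/2)
          + f r * (4 * r ^ 3 * ((3:ℝ)/2) * (r ^ 4 - 4 * c ^ 2) ^ ((3:ℝ)/2 - 1)) = 0 := by
      rw [e1, e2]
      linear_combination ((r ^ 4 - 4 * c ^ 2) ^ ((1:ℝ)/2)) * hode r hr
    rwa [key] at hD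
  refine ⟨h (Real.sqrt (2 * c) + 1), fun r hr => ?_⟩
  obtain ⟨hr0, hx⟩ := posFacts hc hr
  have hq : (0:ℝ) < (r ^ 4 - 4 * c ^ 2) ^ ((3:ℝ)/2) := Real.rpow_pos_of_pos hx _
  have := constOnIoi hderiv hr hr₀
  rw [eq_div_iff hq.ne']
  simpa [hh] using this

lemma ode3_back (c C : ℝ) (hc : 0 < c) (f : ℝ → ℝ)
    (hf : ∀ r ∈ Set.Ioi (Real.sqrt (2 * c)),
      f r = C / (r ^ 4 - 4 * c ^ 2) ^ ((3:ℝ)/2)) :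
    ∀ r ∈ Set.Ioi (Real.sqrt (2 * c)),
      deriv f r * (r ^ 4 - 4 * c ^ 2) + 6 * f r * r ^ 3 = 0 := by
  intro r hr
  obtain ⟨hr0, hx⟩ := posFacts hc hr
  set p := (r ^ 4 - 4 * c ^ 2) ^ ((1:ℝ)/2) with hp
  have hppos : 0 < p := Real.rpow_pos_of_pos hx _
  have hpp : p * p = r ^ 4 - 4 * c ^ 2 := by
    rw [hp, ← Real.rpow_add hx]; norm_num
  have hq : (r ^ 4 - 4 * c ^ 2) ^ ((3:ℝ)/2) = p * (r ^ 4 - 4 * c ^ 2) := by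
    rw [hp, show (3:ℝ)/2 = 1/2 + 1 by norm_num, Real.rpow_add hx, Real.rpow_one]
  have hqpos : (0:ℝ) < (r ^ 4 - 4 * c ^ 2) ^ ((3:ℝ)/2) := Real.rpow_pos_of_pos hx _
  have heq : f =ᶠ[nhds r] fun t => C / (t ^ 4 - 4 * c ^ 2) ^ ((3:ℝ)/2) :=
    Filter.eventuallyEq_of_mem (isOpen_Ioi.mem_nhds hr) hf
  have hG : HasDerivAt (fun t : ℝ => C / (t ^ 4 - 4 * c ^ 2) ^ ((3:ℝ)/2))
      ((0 * (r ^ 4 - 4 * c ^ 2) ^ ((3:ℝ)/2)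
        - C * (4 * r ^ 3 * ((3:ℝ)/2) * (r ^ 4 - 4 * c ^ 2) ^ ((3:ℝ)/2 - 1)))
        / ((r ^ 4 - 4 * c ^ 2) ^ ((3:ℝ)/2)) ^ 2) r :=
    (hasDerivAt_const r C).div
      ((hasDerivAt_x c r).rpow_const (Or.inr (by norm_num))) hqpos.ne'
  have hder : deriv f r = (0 * (r ^ 4 - 4 * c ^ 2) ^ ((3:ℝ)/2)
        - C * (4 * r ^ 3 * ((3:ℝ)/2) * (r ^ 4 - 4 * c ^ 2) ^ ((3:ℝ)/2 - 1)))
        / ((r ^ 4 - 4 * c ^ 2) ^ ((3:ℝ)/2)) ^ 2 := by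
    rw [heq.deriv_eq]; exact hG.deriv
  have e1 : ((3:ℝ)/2 - 1) = (1:ℝ)/2 := by norm_num
  rw [hder, hf r hr, e1, hq, ← hp]
  have hxne : r ^ 4 - 4 * c ^ 2 ≠ 0 := hx.ne'
  field_simp
  nlinarith [hpp, hppos, sq_nonneg p]

/-- general solution of the Spin(7)-instanton (w.r.t. Φ₁) linear ODE
system on T*CP² with the Calabi hyperKähler structure. -/
theorem Spin7_instanton_Phi1_TCP2_ODE_solution
    (c k : ℝ) (hc : 0 < c) (a₂ a₃ a₄ : ℝ → ℝ)
    (hd₂ : ∀ r ∈ Set.Ioi (Real.sqrt (2 * c)), DifferentiableAt ℝ a₂ r)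
    (hd₃ : ∀ r ∈ Set.Ioi (Real.sqrt (2 * c)), DifferentiableAt ℝ a₃ r)
    (hd₄ : ∀ r ∈ Set.Ioi (Real.sqrt (2 * c)), DifferentiableAt ℝ a₄ r) :
    (∀ r ∈ Set.Ioi (Real.sqrt (2 * c)),
      r * deriv a₂ r * (r ^ 4 - 4 * c ^ 2) - 2 * a₂ r * (r ^ 4 + 4 * c ^ 2)
          + 8 * c * k * r ^ 2 = 0 ∧
      deriv a₃ r * (r ^ 4 - 4 * c ^ 2) + 6 * a₃ r * r ^ 3 = 0 ∧
      deriv a₄ r * (r ^ 4 - 4 * c ^ 2) + 6 * a₄ r * r ^ 3 = 0) ↔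
    ∃ C₁ C₂ C₃ : ℝ, ∀ r ∈ Set.Ioi (Real.sqrt (2 * c)),
      a₂ r = (C₁ * (r ^ 4 - 4 * c ^ 2) + 2 * c * k) / r ^ 2 ∧
      a₃ r = C₂ / (r ^ 4 - 4 * c ^ 2) ^ ((3:ℝ)/2) ∧
      a₄ r = C₃ / (r ^ 4 - 4 * c ^ 2) ^ ((3:ℝ)/2) := by
  constructor
  · intro hode
    obtain ⟨C₁, h₁⟩ := ode2_forward c k hc a₂ hd₂ (fun r hr => (hode r hr).1)
    obtain ⟨C₂, h₂⟩ := ode3_forward c hc a₃ hd₃ (fun r hr => (hode r hr).2.1)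
    obtain ⟨C₃, h₃⟩ := ode3_forward c hc a₄ hd₄ (fun r hr => (hode r hr).2.2)
    exact ⟨C₁, C₂, C₃, fun r hr => ⟨h₁ r hr, h₂ r hr, h₃ r hr⟩⟩
  · rintro ⟨C₁, C₂, C₃, hsol⟩ r hr
    exact ⟨ode2_back c k C₁ hc a₂ (fun t ht => (hsol t ht).1) r hr,
      ode3_back c C₂ hc a₃ (fun t ht => (hsol t ht).2.1) r hr,
      ode3_back c C₃ hc a₄ (fun t ht => (hsol t ht).2.2) r hr⟩
end

section
/- Let c > 0 and t, k ∈ ℝ. Suppose a₂ : (√(2c), ∞) → ℝ is differentiable and satisfies, for all r ∈ (√(2c), ∞), the ODE (8·t·a₂³ − 12·a₂²·r² − ((6·r⁴ − 8·c² + 8·k²)·t − 16·c·k)·a₂ + r²·(r⁴ − 4·c² + 4·k² + 8·c·k·t))·a₂' − 8·r·a₂³ − 12·r³·t·a₂² + (6·r⁵ − 8·c²·r + 8·k²·r + 16·c·k·r·t)·a₂ + (t·(r⁴ − 4·c² + 4·k²) − 8·c·k)·r³ = 0. Then there exists a constant C ∈ ℝ such that for all r ∈ (√(2c), ∞): 2·t·a₂⁴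 − 4·r²·a₂³ − ((3·r⁴ − 4·c² + 4·k²)·t − 8·c·k)·a₂² + r²·(r⁴ − 4·c² + 4·k² + 8·c·k·t)·a₂ + t·(r⁴/8 − c² + k²)·r⁴ − 2·c·k·r⁴ = C. -/
/-- exactness of the ω₁-dHYM nonlinear ODE on T*CP²:
any differentiable solution a₂ on (√(2c), ∞) admits the displayed quartic first
integral. -/
theorem dHYM_omega1_TCP2_first_integral
    (c t k : ℝ) (hc : 0 < c) (a₂ : ℝ → ℝ)
    (hdiff : ∀ r ∈ Set.Ioi (Real.sqrt (2 * c)), DifferentiableAt ℝ a₂ r)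
    (hode : ∀ r ∈ Set.Ioi (Real.sqrt (2 * c)),
      (8 * t * (a₂ r) ^ 3 - 12 * (a₂ r) ^ 2 * r ^ 2
          - ((6 * r ^ 4 - 8 * c ^ 2 + 8 * k ^ 2) * t - 16 * c * k) * a₂ r
          + r ^ 2 * (r ^ 4 - 4 * c ^ 2 + 4 * k ^ 2 + 8 * c * k * t)) * deriv a₂ r
        - 8 * r * (a₂ r) ^ 3 - 12 * r ^ 3 * t * (a₂ r) ^ 2
        + (6 * r ^ 5 - 8 * c ^ 2 * r + 8 * k ^ 2 * r + 16 * c * k * r * t) * a₂ r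
        + (t * (r ^ 4 - 4 * c ^ 2 + 4 * k ^ 2) - 8 * c * k) * r ^ 3 = 0) :
    ∃ C : ℝ, ∀ r ∈ Set.Ioi (Real.sqrt (2 * c)),
      2 * t * (a₂ r) ^ 4 - 4 * r ^ 2 * (a₂ r) ^ 3
        - ((3 * r ^ 4 - 4 * c ^ 2 + 4 * k ^ 2) * t - 8 * c * k) * (a₂ r) ^ 2
        + r ^ 2 * (r ^ 4 - 4 * c ^ 2 + 4 * k ^ 2 + 8 * c * k * t) * a₂ r
        + t * (r ^ 4 / 8 - c ^ 2 + k ^ 2) * r ^ 4 - 2 * c * k * r ^ 4 = C := by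
  set s : Set ℝ := Set.Ioi (Real.sqrt (2 * c)) with hs
  set g : ℝ → ℝ := fun r =>
      2 * t * (a₂ r) ^ 4 - 4 * r ^ 2 * (a₂ r) ^ 3
        - ((3 * r ^ 4 - 4 * c ^ 2 + 4 * k ^ 2) * t - 8 * c * k) * (a₂ r) ^ 2
        + r ^ 2 * (r ^ 4 - 4 * c ^ 2 + 4 * k ^ 2 + 8 * c * k * t) * a₂ r
        + t * (r ^ 4 / 8 - c ^ 2 + k ^ 2) * r ^ 4 - 2 * c * k * r ^ 4 with hg
  have hopen : IsOpen s := isOpen_Ioi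
  have key : ∀ r ∈ s, HasDerivAt g 0 r := by
    intro r hr
    have hb : HasDerivAt a₂ (deriv a₂ r) r := (hdiff r hr).hasDerivAt
    have hA := (hb.pow 4).const_mul (2*t)
    have hB := ((hasDerivAt_pow 2 r).const_mul (4:ℝ)).mul (hb.pow 3)
    have hC := ((((((hasDerivAt_pow 4 r).const_mul (3:ℝ)).sub_const (4*c^2)).add_const
          (4*k^2)).mul_const t).sub_const (8*c*k)).mul (hb.pow 2)
    have hD := ((hasDerivAt_pow 2 r).mul
          ((((hasDerivAt_pow 4 r).sub_const (4*c^2)).add_const (4*k^2)).add_const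
            (8*c*k*t))).mul hb
    have hE := (((((hasDerivAt_pow 4 r).div_const 8).sub_const (c^2)).add_const
          (k^2)).const_mul t).mul (hasDerivAt_pow 4 r)
    have hF := (hasDerivAt_pow 4 r).const_mul (2*c*k)
    have H := ((((hA.sub hB).sub hC).add hD).add hE).sub hF
    refine H.congr_deriv ?_
    have h := hode r hr
    push_cast
    simp only [Pi.pow_apply, Pi.mul_apply]
    linear_combination h
  have hconv : Convex ℝ s := convex_Ioi _
  have hx₀ : Real.sqrt (2 * c) + 1 ∈ s := by
    simp [hs, Set.mem_Ioi]
  refine ⟨g (Real.sqrt (2 * c) + 1), fun r hr => ?_⟩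
  have hdg : DifferentiableOn ℝ g s := fun x hx => ((key x hx).differentiableAt).differentiableWithinAt
  have hfd : ∀ x ∈ s, fderivWithin ℝ g s x = 0 := by
    intro x hx
    rw [fderivWithin_of_isOpen hopen hx]
    have := (key x hx).hasFDerivAt.fderiv
    rw [this]
    ext
    simp
  exact hconv.is_const_of_fderivWithin_eq_zero hdg hfd hr hx₀
end

section
/- Let c ≥ 0, k ∈ ℝ, and C₃, C₄ ∈ ℝ not both zero. Define p : [√(2c), ∞) → ℝ by p(r) = √((r⁴ + 4·k²)·(r⁴ − 4·c²)) / (2·r²·√(C₃² + C₄²)). Then p(√(2c)) = 0 and, for all r ≥ √(2c), √(r⁴ − 4·c²)·(C₃² + C₄²)·p(r)³ − ((r⁴ + 4·k²)·(r⁴ − 4·c²)^{3/2}/(4·r⁴))·p(r) = 0. -/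
/-- the explicit strictly deformed Spin(7)-instanton profile on
T*CP² with respect to Φ₁: p(r) = √((r⁴+4k²)(r⁴−4c²))/(2r²√(C₃²+C₄²)) satisfies
the boundary condition p(√(2c)) = 0 and annihilates the cubic first-integral
expression on [√(2c), ∞). -/
theorem deformed_Spin7_Phi1_TCP2_strict_solution
    (c k C₃ C₄ : ℝ) (hc : 0 ≤ c) (hC : ¬(C₃ = 0 ∧ C₄ = 0))
    (p : ℝ → ℝ)
    (hp : ∀ r : ℝ, p r =
      Real.sqrt ((r ^ 4 + 4 * k ^ 2) * (r ^ 4 - 4 * c ^ 2))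
        / (2 * r ^ 2 * Real.sqrt (C₃ ^ 2 + C₄ ^ 2))) :
    p (Real.sqrt (2 * c)) = 0 ∧
    ∀ r : ℝ, Real.sqrt (2 * c) ≤ r →
      Real.sqrt (r ^ 4 - 4 * c ^ 2) * (C₃ ^ 2 + C₄ ^ 2) * (p r) ^ 3
        - ((r ^ 4 + 4 * k ^ 2) * (r ^ 4 - 4 * c ^ 2) ^ ((3:ℝ)/2) / (4 * r ^ 4)) * p r
        = 0 := by
  have hD : 0 < C₃ ^ 2 + C₄ ^ 2 := by
    rcases not_and_or.mp hC with h | h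
    · have h1 : 0 < C₃ ^ 2 := by positivity
      nlinarith [sq_nonneg C₄]
    · have h1 : 0 < C₄ ^ 2 := by positivity
      nlinarith [sq_nonneg C₃]
  have hsq4 : (Real.sqrt (2 * c)) ^ 4 = 4 * c ^ 2 := by
    have h2 : (Real.sqrt (2 * c)) ^ 2 = 2 * c := Real.sq_sqrt (by linarith)
    calc (Real.sqrt (2 * c)) ^ 4 = ((Real.sqrt (2 * c)) ^ 2) ^ 2 := by ring
    _ = (2 * c) ^ 2 := by rw [h2]
    _ = 4 * c ^ 2 := by ring
  constructor
  · rw [hp]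
    rw [hsq4]
    simp
  · intro r hr
    have hS : 0 ≤ r ^ 4 - 4 * c ^ 2 := by
      have hr0 : 0 ≤ Real.sqrt (2 * c) := Real.sqrt_nonneg _
      have h4 : (Real.sqrt (2 * c)) ^ 4 ≤ r ^ 4 := by
        exact pow_le_pow_left₀ hr0 hr 4
      rw [hsq4] at h4; linarith
    rcases eq_or_lt_of_le hS with hS0 | hSpos
    · -- degenerate case r⁴ = 4c²
      rw [hp, ← hS0]
      simp
    · have hrnn : 0 ≤ r := le_trans (Real.sqrt_nonneg _) hr
      have hr0 : 0 < r := by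
        rcases hrnn.lt_or_eq with h | h
        · exact h
        · exfalso; rw [← h] at hSpos; nlinarith [sq_nonneg c]
      set A := r ^ 4 + 4 * k ^ 2 with hA
      have hA0 : 0 ≤ A := by positivity
      set S := r ^ 4 - 4 * c ^ 2 with hSdef
      set s := Real.sqrt S with hs
      set a := Real.sqrt A with ha
      set d := Real.sqrt (C₃ ^ 2 + C₄ ^ 2) with hd
      have hd0 : 0 < d := Real.sqrt_pos.mpr hD
      have hd2 : d ^ 2 = C₃ ^ 2 + C₄ ^ 2 := Real.sq_sqrt hD.le
      have ha2 : a ^ 2 = A := Real.sq_sqrt hA0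
      have hs2 : s ^ 2 = S := Real.sq_sqrt hSpos.le
      have hs0 : 0 ≤ s := Real.sqrt_nonneg _
      have hAS : Real.sqrt (A * S) = a * s := Real.sqrt_mul hA0 S
      have hrpow : S ^ ((3:ℝ)/2) = s ^ 3 := by
        rw [← hs2, ← Real.rpow_natCast s 2, ← Real.rpow_mul hs0,
          ← Real.rpow_natCast s 3]
        norm_num
      rw [hp, hAS, hrpow, ← hd2, ← ha2]
      have hrne : r ≠ 0 := ne_of_gt hr0
      have hdne : d ≠ 0 := ne_of_gt hd0
      field_simp
      ring
end

section
/- Let c > 0 and k, C ∈ ℝ, and set D(r) = C²·r⁴ − 8·C·c·k + r⁴ − 4·c² + 4·k². Then: (i) D(r) ≥ 0 for all r ≥ √(2c); (ii) for either sign s ∈ {+1, −1}, the function a₂(r) = (C·r² + s·√(D(r)))/2 satisfies a₂(r)² − r⁴/4 + c² − k² = C·(a₂(r)·r² − 2·c·k) for all r ≥ √(2c); (iii) if C·c ≥ k then the solution with s = −1 satisfies a₂(√(2c)) = k, and if C·c ≤ k then the solution with s = +1 satisfies a₂(√(2c)) = k. -/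
/-- the explicit deformed Spin(7)-instantons on T*CP² w.r.t. Φ₁
with a₃ = a₄ = 0: nonnegativity of D(r) = C²r⁴ − 8Cck + r⁴ − 4c² + 4k² on
[√(2c), ∞), the linear first-integral relation for
a₂(r) = (Cr² ± √(D(r)))/2, and the boundary condition a₂(√(2c)) = k with the
stated sign rule. -/
theorem deformed_Spin7_Phi1_TCP2_a2_solutions
    (c k C : ℝ) (hc : 0 < c) :
    (∀ r : ℝ, Real.sqrt (2 * c) ≤ r →
      0 ≤ C ^ 2 * r ^ 4 - 8 * C * c * k + r ^ 4 - 4 * c ^ 2 + 4 * k ^ 2) ∧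
    (∀ s : ℝ, (s = 1 ∨ s = -1) → ∀ r : ℝ, Real.sqrt (2 * c) ≤ r →
      ((C * r ^ 2 + s * Real.sqrt (C ^ 2 * r ^ 4 - 8 * C * c * k + r ^ 4 - 4 * c ^ 2 + 4 * k ^ 2)) / 2) ^ 2
          - r ^ 4 / 4 + c ^ 2 - k ^ 2
        = C * (((C * r ^ 2 + s * Real.sqrt (C ^ 2 * r ^ 4 - 8 * C * c * k + r ^ 4 - 4 * c ^ 2 + 4 * k ^ 2)) / 2)
            * r ^ 2 - 2 * c * k)) ∧
    (k ≤ C * c →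
      (C * Real.sqrt (2 * c) ^ 2
        - Real.sqrt (C ^ 2 * Real.sqrt (2 * c) ^ 4 - 8 * C * c * k
            + Real.sqrt (2 * c) ^ 4 - 4 * c ^ 2 + 4 * k ^ 2)) / 2 = k) ∧
    (C * c ≤ k →
      (C * Real.sqrt (2 * c) ^ 2
        + Real.sqrt (C ^ 2 * Real.sqrt (2 * c) ^ 4 - 8 * C * c * k
            + Real.sqrt (2 * c) ^ 4 - 4 * c ^ 2 + 4 * k ^ 2)) / 2 = k) := by
  have h2c : (0:ℝ) ≤ 2 * c := by linarith
  have hs2 : Real.sqrt (2 * c) ^ 2 = 2 * c := Real.sq_sqrt h2c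
  have hs4 : Real.sqrt (2 * c) ^ 4 = 4 * c ^ 2 := by nlinarith [hs2]
  have hD : ∀ r : ℝ, Real.sqrt (2 * c) ≤ r →
      0 ≤ C ^ 2 * r ^ 4 - 8 * C * c * k + r ^ 4 - 4 * c ^ 2 + 4 * k ^ 2 := by
    intro r hr
    have h0 : 0 ≤ Real.sqrt (2 * c) := Real.sqrt_nonneg _
    have hr2 : 2 * c ≤ r ^ 2 := by nlinarith
    have h4 : 4 * c ^ 2 ≤ r ^ 4 := by nlinarith
    nlinarith [sq_nonneg (C * c - k),
      mul_nonneg (sq_nonneg C) (show (0:ℝ) ≤ r ^ 4 - 4 * c ^ 2 by linarith)]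
  refine ⟨hD, ?_, ?_, ?_⟩
  · rintro s (rfl | rfl) r hr <;>
      linear_combination Real.sq_sqrt (hD r hr) / 4
  · intro hk
    have hE : C ^ 2 * Real.sqrt (2 * c) ^ 4 - 8 * C * c * k
        + Real.sqrt (2 * c) ^ 4 - 4 * c ^ 2 + 4 * k ^ 2 = (2 * (C * c - k)) ^ 2 := by
      rw [hs4]; ring
    rw [hE, Real.sqrt_sq (by linarith), hs2]; ring
  · intro hk
    have hE : C ^ 2 * Real.sqrt (2 * c) ^ 4 - 8 * C * c * k
        + Real.sqrt (2 * c) ^ 4 - 4 * c ^ 2 + 4 * k ^ 2 = (2 * (k - C * c)) ^ 2 := by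
      rw [hs4]; ring
    rw [hE, Real.sqrt_sq (by linarith), hs2]; ring
end

section
/- Let c > 0 and k, C ∈ ℝ. For either sign s ∈ {+1, −1}, define for r ≥ √(2c): a₄(r) = (4·C·c·k + s·r²·√(C²·(r⁴ − 4·c² + 4·k²) + r⁴ + 4·k²)) · √(r⁴ − 4·c²) / (−2·C²·(r⁴ − 4·c²) − 2·r⁴). Then a₄(√(2c)) = 0 and, for all r ≥ √(2c), (C²·(r⁴ − 4·c²) + r⁴)·a₄(r)² + 4·C·c·k·√(r⁴ − 4·c²)·a₄(r) − (r⁴ + 4·k²)·(r⁴ − 4·c²)/4 = 0. -/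
/-- the explicit deformed Spin(7)-instanton profiles a₄ on T*CP²
with respect to Φ₂ satisfy the boundary condition a₄(√(2c)) = 0 and the
displayed quadratic relation on [√(2c), ∞). -/
theorem deformed_Spin7_Phi2_TCP2_a4_solutions
    (c k C : ℝ) (hc : 0 < c) (s : ℝ) (hs : s = 1 ∨ s = -1)
    (a₄ : ℝ → ℝ)
    (ha : ∀ r : ℝ, a₄ r =
      (4 * C * c * k
          + s * r ^ 2 * Real.sqrt (C ^ 2 * (r ^ 4 - 4 * c ^ 2 + 4 * k ^ 2) + r ^ 4 + 4 * k ^ 2))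
        * Real.sqrt (r ^ 4 - 4 * c ^ 2)
        / (-2 * C ^ 2 * (r ^ 4 - 4 * c ^ 2) - 2 * r ^ 4)) :
    a₄ (Real.sqrt (2 * c)) = 0 ∧
    ∀ r : ℝ, Real.sqrt (2 * c) ≤ r →
      (C ^ 2 * (r ^ 4 - 4 * c ^ 2) + r ^ 4) * (a₄ r) ^ 2
        + 4 * C * c * k * Real.sqrt (r ^ 4 - 4 * c ^ 2) * a₄ r
        - (r ^ 4 + 4 * k ^ 2) * (r ^ 4 - 4 * c ^ 2) / 4 = 0 := by
  have hs2 : s ^ 2 = 1 := by rcases hs with h | h <;> rw [h] <;> norm_num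
  constructor
  · set r := Real.sqrt (2 * c) with hr
    have h2 : r ^ 2 = 2 * c := Real.sq_sqrt (by linarith)
    have h4 : r ^ 4 - 4 * c ^ 2 = 0 := by
      have : r ^ 4 = (r ^ 2) ^ 2 := by ring
      rw [this, h2]; ring
    rw [ha r, h4]
    simp
  · intro r hr
    have hr0 : 0 ≤ r := le_trans (Real.sqrt_nonneg _) hr
    have h2c : 2 * c ≤ r ^ 2 := by
      nlinarith [Real.sq_sqrt (by linarith : (0:ℝ) ≤ 2 * c),
        pow_le_pow_left₀ (Real.sqrt_nonneg (2*c)) hr 2]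
    have hq0 : 4 * c ^ 2 ≤ r ^ 4 := by nlinarith
    have hr4 : 0 < r ^ 4 := by nlinarith
    have hsq : (Real.sqrt (r ^ 4 - 4 * c ^ 2)) ^ 2 = r ^ 4 - 4 * c ^ 2 :=
      Real.sq_sqrt (by linarith)
    have hSnn : 0 ≤ C ^ 2 * (r ^ 4 - 4 * c ^ 2 + 4 * k ^ 2) + r ^ 4 + 4 * k ^ 2 := by
      nlinarith [sq_nonneg C, sq_nonneg k, sq_nonneg (C*k)]
    have hS : (Real.sqrt (C ^ 2 * (r ^ 4 - 4 * c ^ 2 + 4 * k ^ 2) + r ^ 4 + 4 * k ^ 2)) ^ 2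
        = C ^ 2 * (r ^ 4 - 4 * c ^ 2 + 4 * k ^ 2) + r ^ 4 + 4 * k ^ 2 := Real.sq_sqrt hSnn
    set sq := Real.sqrt (r ^ 4 - 4 * c ^ 2) with hsqdef
    set S := Real.sqrt (C ^ 2 * (r ^ 4 - 4 * c ^ 2 + 4 * k ^ 2) + r ^ 4 + 4 * k ^ 2) with hSdef
    set A := C ^ 2 * (r ^ 4 - 4 * c ^ 2) + r ^ 4 with hA
    set N := 4 * C * c * k + s * r ^ 2 * S with hN
    set D := -2 * C ^ 2 * (r ^ 4 - 4 * c ^ 2) - 2 * r ^ 4 with hD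
    have hApos : 0 < A := by
      rw [hA]; nlinarith [mul_nonneg (sq_nonneg C) (by linarith : (0:ℝ) ≤ r ^ 4 - 4 * c ^ 2)]
    have hDne : D ≠ 0 := by rw [hD]; rw [hA] at hApos; nlinarith
    rw [ha r]
    have e : A * (N * sq / D) ^ 2 + 4 * C * c * k * sq * (N * sq / D)
        - (r ^ 4 + 4 * k ^ 2) * (r ^ 4 - 4 * c ^ 2) / 4
        = (A * (N * sq) ^ 2 + 4 * C * c * k * sq * (N * sq) * D
            - (r ^ 4 + 4 * k ^ 2) * (r ^ 4 - 4 * c ^ 2) / 4 * D ^ 2) / D ^ 2 := by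
      field_simp
    rw [e, div_eq_zero_iff]
    left
    have hDA : D = -2 * A := by rw [hD, hA]; ring
    rw [hDA, hN]
    linear_combination (A * (s ^ 2 * r ^ 4 * S ^ 2 - (4*C*c*k) ^ 2)) * hsq
      + (A * (r ^ 4 - 4 * c ^ 2) * r ^ 4 * S ^ 2) * hs2
      + (A * (r ^ 4 - 4 * c ^ 2) * r ^ 4) * hS
end

section
/- Let c > 0, k ∈ ℝ, C ∈ ℝ with C ≠ 0, and s ∈ {+1, −1}. Define for r ≥ √(2c): a₃(r) = ((C·r² + s·√((C² + 1)·r⁴ + 4·k²))/(2·r²))·√(r⁴ − 4·c²). Then a₃(√(2c)) = 0 and, for all r ≥ √(2c): (4·a₃(r)²·r⁴ + (r⁴ − 4·c²)·(r⁴ − 4·k²))² + 16·k²·r⁴·(r⁴ − 4·c²)² = ((C² + 1)/C²)·(4·a₃(r)²·r⁴ − (r⁴ − 4·c²)·(r⁴ + 4·k²))². -/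
/-- the explicit deformed Spin(7)-instanton profiles a₃ on T*CP²
with respect to Φ₂ satisfy the boundary condition a₃(√(2c)) = 0 and make the
displayed quantity equal to the constant (C² + 1)/C² on [√(2c), ∞). -/
theorem deformed_Spin7_Phi2_TCP2_a3_solutions
    (c k C : ℝ) (hc : 0 < c) (hC : C ≠ 0) (s : ℝ) (hs : s = 1 ∨ s = -1)
    (a₃ : ℝ → ℝ)
    (ha : ∀ r : ℝ, a₃ r =
      ((C * r ^ 2 + s * Real.sqrt ((C ^ 2 + 1) * r ^ 4 + 4 * k ^ 2)) / (2 * r ^ 2))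
        * Real.sqrt (r ^ 4 - 4 * c ^ 2)) :
    a₃ (Real.sqrt (2 * c)) = 0 ∧
    ∀ r : ℝ, Real.sqrt (2 * c) ≤ r →
      (4 * (a₃ r) ^ 2 * r ^ 4 + (r ^ 4 - 4 * c ^ 2) * (r ^ 4 - 4 * k ^ 2)) ^ 2
          + 16 * k ^ 2 * r ^ 4 * (r ^ 4 - 4 * c ^ 2) ^ 2
        = ((C ^ 2 + 1) / C ^ 2) *
            (4 * (a₃ r) ^ 2 * r ^ 4 - (r ^ 4 - 4 * c ^ 2) * (r ^ 4 + 4 * k ^ 2)) ^ 2 := by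
  have h2c : (0:ℝ) ≤ 2 * c := by linarith
  have hsq : Real.sqrt (2 * c) ^ 2 = 2 * c := Real.sq_sqrt h2c
  constructor
  · rw [ha]
    have h0 : Real.sqrt (2 * c) ^ 4 - 4 * c ^ 2 = 0 := by nlinarith [hsq]
    rw [h0, Real.sqrt_zero, mul_zero]
  · intro r hr
    have hrpos : 0 < r :=
      lt_of_lt_of_le (Real.sqrt_pos.mpr (by linarith)) hr
    have hr2 : (r:ℝ) ^ 2 ≠ 0 := pow_ne_zero 2 hrpos.ne'
    have hDnn : 0 ≤ r ^ 4 - 4 * c ^ 2 := by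
      have h2 : 2 * c ≤ r ^ 2 := by
        nlinarith [Real.sqrt_nonneg (2 * c), hsq, hr]
      nlinarith
    have hS : Real.sqrt (r ^ 4 - 4 * c ^ 2) ^ 2 = r ^ 4 - 4 * c ^ 2 :=
      Real.sq_sqrt hDnn
    have hQnn : 0 ≤ (C ^ 2 + 1) * r ^ 4 + 4 * k ^ 2 := by positivity
    have hQ : Real.sqrt ((C ^ 2 + 1) * r ^ 4 + 4 * k ^ 2) ^ 2
        = (C ^ 2 + 1) * r ^ 4 + 4 * k ^ 2 := Real.sq_sqrt hQnn
    have hs2 : s ^ 2 = 1 := by rcases hs with h | h <;> simp [h]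
    set Q := Real.sqrt ((C ^ 2 + 1) * r ^ 4 + 4 * k ^ 2) with hQdef
    set S := Real.sqrt (r ^ 4 - 4 * c ^ 2) with hSdef
    have hC2 : (C:ℝ) ^ 2 ≠ 0 := pow_ne_zero 2 hC
    have hE : 4 * (a₃ r) ^ 2 * r ^ 4
        = (C * r ^ 2 + s * Q) ^ 2 * (r ^ 4 - 4 * c ^ 2) := by
      rw [ha r, ← hQdef, mul_pow, div_pow, hS]
      field_simp
      ring
    rw [hE, div_mul_eq_mul_div, eq_div_iff hC2]
    linear_combination
      (-(r ^ 4 - 4 * c ^ 2) ^ 2 *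
          (3 * C ^ 2 * r ^ 4 + 4 * s * C * r ^ 2 * Q + s ^ 2 * Q ^ 2
            - r ^ 4 - 4 * k ^ 2) * Q ^ 2) * hs2
      + (-(r ^ 4 - 4 * c ^ 2) ^ 2 *
          (3 * C ^ 2 * r ^ 4 + 4 * s * C * r ^ 2 * Q + s ^ 2 * Q ^ 2
            - r ^ 4 - 4 * k ^ 2)) * hQ
end

section
/- Let c > 0, k ∈ ℝ, C ∈ ℝ with C ≠ 0, and s ∈ {+1, −1}. For r ≥ √(2c), let a₃(r) = ((C·r² + s·√((C² + 1)·r⁴ + 4·k²))/(2·r²))·√(r⁴ − 4·c²), and set U(r) = 4·a₃(r)·r⁴·√(r⁴ − 4·c²) and V(r) = r⁸ − 4·r⁴·(a₃(r)² + c² − k²) − 16·c²·k². Then V(r) = −C·U(r) for all r ≥ √(2c). Consequently, if in addition C² ≠ 1, then (2·C/(C² − 1))·(U(r)² − V(r)²) = 2·U(r)·V(r) for all r ≥ √(2c). -/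
/-- the explicit deformed Spin(7)-instanton profiles a₃ on T*CP²
(with respect to Φ₂) satisfy V = −C·U, where U = 4a₃r⁴√(r⁴−4c²) and
V = r⁸ − 4r⁴(a₃² + c² − k²) − 16c²k²; consequently, if C² ≠ 1 they solve the
ω₂-dHYM equation with tan θ = 2C/(C² − 1). -/
theorem deformed_Spin7_Phi2_realizes_dHYM_omega2
    (c k C : ℝ) (hc : 0 < c) (hC : C ≠ 0) (s : ℝ) (hs : s = 1 ∨ s = -1)
    (a₃ U V : ℝ → ℝ)
    (ha : ∀ r : ℝ, a₃ r =
      ((C * r ^ 2 + s * Real.sqrt ((C ^ 2 + 1) * r ^ 4 + 4 * k ^ 2)) / (2 * r ^ 2))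
        * Real.sqrt (r ^ 4 - 4 * c ^ 2))
    (hU : ∀ r : ℝ, U r = 4 * a₃ r * r ^ 4 * Real.sqrt (r ^ 4 - 4 * c ^ 2))
    (hV : ∀ r : ℝ, V r =
      r ^ 8 - 4 * r ^ 4 * ((a₃ r) ^ 2 + c ^ 2 - k ^ 2) - 16 * c ^ 2 * k ^ 2) :
    (∀ r : ℝ, Real.sqrt (2 * c) ≤ r → V r = -C * U r) ∧
    (C ^ 2 ≠ 1 → ∀ r : ℝ, Real.sqrt (2 * c) ≤ r →
      (2 * C / (C ^ 2 - 1)) * ((U r) ^ 2 - (V r) ^ 2) = 2 * U r * V r) := by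
  have main : ∀ r : ℝ, Real.sqrt (2 * c) ≤ r → V r = -C * U r := by
    intro r hr
    have hrpos : 0 < r :=
      lt_of_lt_of_le (Real.sqrt_pos.mpr (by linarith)) hr
    have h2c : 2 * c ≤ r ^ 2 := by
      have := Real.sq_sqrt (by linarith : (0:ℝ) ≤ 2 * c)
      nlinarith [Real.sqrt_nonneg (2 * c)]
    have h4c : 4 * c ^ 2 ≤ r ^ 4 := by nlinarith
    have hs2 : s ^ 2 = 1 := by rcases hs with h | h <;> rw [h] <;> norm_num
    rw [hV, hU, ha]
    set E := Real.sqrt (r ^ 4 - 4 * c ^ 2) with hEdef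
    set D := Real.sqrt ((C ^ 2 + 1) * r ^ 4 + 4 * k ^ 2) with hDdef
    have hE : E ^ 2 = r ^ 4 - 4 * c ^ 2 := Real.sq_sqrt (by linarith)
    have hD : D ^ 2 = (C ^ 2 + 1) * r ^ 4 + 4 * k ^ 2 :=
      Real.sq_sqrt (by positivity)
    have hr2 : (r : ℝ) ^ 2 ≠ 0 := by positivity
    field_simp
    linear_combination (-(4 * D ^ 2 * E ^ 2)) * hs2 +
      (-(4 * E ^ 2)) * hD + (-(4 * r ^ 4 + 16 * k ^ 2)) * hE
  refine ⟨main, fun hC1 r hr => ?_⟩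
  have h := main r hr
  have hden : C ^ 2 - 1 ≠ 0 := fun h' => hC1 (by linarith)
  rw [h]
  field_simp
  ring
end

section
/- Let C₀ > 0. Suppose u : (0, ∞) → (0, ∞) is differentiable and satisfies u(r)·exp(u(r)) = C₀·r^{128/45} for all r > 0. Define p(r) = 10·r^{6/5}/(3·√(u(r))). Then p is differentiable on (0, ∞) and satisfies, for all r > 0: (9·r·p(r)² + 100·r^{17/5})·p'(r) − 120·r^{12/5}·p(r) + 2·p(r)³ = 0. -/
/-- Main derivative computation packaged as a lemma. -/
lemma lambertW_profile_hasDeriv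
    (C₀ : ℝ) (u : ℝ → ℝ)
    (hu_pos : ∀ r ∈ Set.Ioi (0:ℝ), 0 < u r)
    (hu_diff : ∀ r ∈ Set.Ioi (0:ℝ), DifferentiableAt ℝ u r)
    (hu_eq : ∀ r ∈ Set.Ioi (0:ℝ), u r * Real.exp (u r) = C₀ * r ^ ((128:ℝ)/45))
    (p : ℝ → ℝ)
    (hp : ∀ r : ℝ, p r = 10 * r ^ ((6:ℝ)/5) / (3 * Real.sqrt (u r)))
    (r : ℝ) (hr : 0 < r) :
    HasDerivAt p
      ((10 * ((6:ℝ)/5 * r ^ ((6:ℝ)/5 - 1)) * (3 * Real.sqrt (u r)) -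
        10 * r ^ ((6:ℝ)/5) * (3 * (1 / (2 * Real.sqrt (u r)) * deriv u r))) /
        (3 * Real.sqrt (u r)) ^ 2) r := by
  have ha := hu_pos r hr
  have hs : 0 < Real.sqrt (u r) := Real.sqrt_pos.2 ha
  have hud : HasDerivAt u (deriv u r) r := (hu_diff r hr).hasDerivAt
  have hsq : HasDerivAt (fun x => Real.sqrt (u x)) (1 / (2 * Real.sqrt (u r)) * deriv u r) r :=
    (Real.hasDerivAt_sqrt ha.ne').comp r hud
  have hN : HasDerivAt (fun x : ℝ => 10 * x ^ ((6:ℝ)/5)) (10 * ((6:ℝ)/5 * r ^ ((6:ℝ)/5 - 1))) r := by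
    simpa [mul_comm] using (Real.hasDerivAt_rpow_const (p := (6:ℝ)/5) (Or.inl hr.ne')).const_mul (10:ℝ)
  have hD : HasDerivAt (fun x => 3 * Real.sqrt (u x)) (3 * (1 / (2 * Real.sqrt (u r)) * deriv u r)) r :=
    hsq.const_mul 3
  have hp' := hN.div hD (by positivity)
  have hpf : p = fun x => 10 * x ^ ((6:ℝ)/5) / (3 * Real.sqrt (u x)) := funext hp
  rw [hpf]
  exact hp'

/-- the Lambert-W profile solves the deformed Spin(7)-instanton
ODE on the Bryant–Salamon cone: if u > 0 is differentiable with
u(r)e^{u(r)} = C₀ r^{128/45}, then p(r) = 10r^{6/5}/(3√(u(r))) is differentiable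
on (0, ∞) and satisfies (9rp² + 100r^{17/5})p' − 120r^{12/5}p + 2p³ = 0. -/
theorem deformed_Spin7_BryantSalamon_cone_LambertW_solution
    (C₀ : ℝ) (hC₀ : 0 < C₀) (u : ℝ → ℝ)
    (hu_pos : ∀ r ∈ Set.Ioi (0:ℝ), 0 < u r)
    (hu_diff : ∀ r ∈ Set.Ioi (0:ℝ), DifferentiableAt ℝ u r)
    (hu_eq : ∀ r ∈ Set.Ioi (0:ℝ), u r * Real.exp (u r) = C₀ * r ^ ((128:ℝ)/45))
    (p : ℝ → ℝ)
    (hp : ∀ r : ℝ, p r = 10 * r ^ ((6:ℝ)/5) / (3 * Real.sqrt (u r))) :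
    (∀ r ∈ Set.Ioi (0:ℝ), DifferentiableAt ℝ p r) ∧
    (∀ r ∈ Set.Ioi (0:ℝ),
      (9 * r * (p r) ^ 2 + 100 * r ^ ((17:ℝ)/5)) * deriv p r
        - 120 * r ^ ((12:ℝ)/5) * p r + 2 * (p r) ^ 3 = 0) := by
  constructor
  · intro r hr
    exact (lambertW_profile_hasDeriv C₀ u hu_pos hu_diff hu_eq p hp r hr).differentiableAt
  · intro r hr
    rw [Set.mem_Ioi] at hr
    have ha := hu_pos r hr
    have hs : 0 < Real.sqrt (u r) := Real.sqrt_pos.2 ha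
    have hs2 : Real.sqrt (u r) ^ 2 = u r := Real.sq_sqrt ha.le
    have hE : (0:ℝ) < Real.exp (u r) := Real.exp_pos _
    have hud : HasDerivAt u (deriv u r) r := (hu_diff r hr).hasDerivAt
    -- derivative of the implicit equation
    have hL : HasDerivAt (fun x => u x * Real.exp (u x))
        (deriv u r * Real.exp (u r) + u r * (Real.exp (u r) * deriv u r)) r :=
      hud.mul ((Real.hasDerivAt_exp (u r)).comp r hud)
    have hR : HasDerivAt (fun x : ℝ => C₀ * x ^ ((128:ℝ)/45))
        (C₀ * ((128:ℝ)/45 * r ^ ((128:ℝ)/45 - 1))) r := by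
      simpa [mul_comm] using (Real.hasDerivAt_rpow_const (p := (128:ℝ)/45) (Or.inl hr.ne')).const_mul C₀
    have hev : (fun x => u x * Real.exp (u x)) =ᶠ[nhds r] (fun x : ℝ => C₀ * x ^ ((128:ℝ)/45)) := by
      filter_upwards [Ioi_mem_nhds hr] with x hx using hu_eq x hx
    have hdeq : deriv u r * Real.exp (u r) + u r * (Real.exp (u r) * deriv u r)
        = C₀ * ((128:ℝ)/45 * r ^ ((128:ℝ)/45 - 1)) :=
      (hL.congr_of_eventuallyEq hev.symm).unique hR
    have hrp : r ^ ((128:ℝ)/45 - 1) * r = r ^ ((128:ℝ)/45) := by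
      rw [← Real.rpow_add_one hr.ne']; norm_num
    -- solve for deriv u r
    have hd_val : deriv u r = 128/45 * u r / (r * (1 + u r)) := by
      have h1 := hu_eq r hr
      have h2 : deriv u r * (r * (1 + u r)) * Real.exp (u r)
          = (128/45 * u r) * Real.exp (u r) := by
        calc deriv u r * (r * (1 + u r)) * Real.exp (u r)
            = (deriv u r * Real.exp (u r) + u r * (Real.exp (u r) * deriv u r)) * r := by ring
          _ = C₀ * ((128:ℝ)/45 * r ^ ((128:ℝ)/45 - 1)) * r := by rw [hdeq]
          _ = 128/45 * (C₀ * r ^ ((128:ℝ)/45)) := by rw [mul_assoc, mul_assoc, hrp]; ring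
          _ = 128/45 * (u r * Real.exp (u r)) := by rw [h1]
          _ = (128/45 * u r) * Real.exp (u r) := by ring
      have h3 : deriv u r * (r * (1 + u r)) = 128/45 * u r :=
        mul_right_cancel₀ hE.ne' h2
      have hden : r * (1 + u r) ≠ 0 := by positivity
      field_simp at h3 ⊢
      linarith [h3]
    have hpd := lambertW_profile_hasDeriv C₀ u hu_pos hu_diff hu_eq p hp r hr
    have hderiv := hpd.deriv
    have h125 : r ^ ((12:ℝ)/5) = r ^ ((6:ℝ)/5) * r ^ ((6:ℝ)/5) := by
      rw [← Real.rpow_add hr]; norm_num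
    have h175 : r ^ ((17:ℝ)/5) = r ^ ((12:ℝ)/5) * r := by
      rw [← Real.rpow_add_one hr.ne']; norm_num
    have h15 : r ^ ((6:ℝ)/5 - 1) = r ^ ((6:ℝ)/5) / r := by
      rw [Real.rpow_sub hr, Real.rpow_one]
    rw [hderiv, hp r, hd_val, h175, h125, h15]
    set t := r ^ ((6:ℝ)/5) with ht
    set s := Real.sqrt (u r) with hsdef
    rw [← hs2]
    have h1s : (1:ℝ) + s ^ 2 ≠ 0 := by positivity
    field_simp
    ring
end
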